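/- arXiv:1406.7326 — 4 statements merged into one kernel-verified Lean document; each statement's English description precedes it below -/
import Mathlib

section
/- Let V be a real number with V ≥ e^e, let η = 1/log V, and let k = ⌊V/(1+η)⌋. Then for any real L ≥ e (playing the role of log log(qT)), we have k(log(k·L) − 2·log(η·V)) ≤ −V·log(V/L) + 2V·log log V + V. -/
set_option maxHeartbeats 1000000 in
theorem stmt0 (V L : ℝ) (hV : Real.exp (Real.exp 1) ≤ V) (hL : Real.exp 1 ≤ L) :
    ((⌊V / (1 + 1 / Real.log V)⌋ : ℤ) : ℝ) *
      (Real.log (((⌊V / (1 + 1 / Real.log V)⌋ : ℤ) : ℝ) * L) -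
        2 * Real.log ((1 / Real.log V) * V)) ≤
      -V * Real.log (V / L) + 2 * V * Real.log (Real.log V) + V := by
  have he1 : (2.7182818283:ℝ) < Real.exp 1 := Real.exp_one_gt_d9
  have hV0 : (0:ℝ) < V := lt_of_lt_of_le (Real.exp_pos _) hV
  have hL0 : (0:ℝ) < L := lt_of_lt_of_le (Real.exp_pos _) hL
  set x := Real.log V with hxdef
  have hx : Real.exp 1 ≤ x := by
    have := Real.log_le_log (Real.exp_pos _) hV
    rwa [Real.log_exp] at this
  have hxe : (2.7:ℝ) ≤ x := by linarith
  have hx0 : (0:ℝ) < x := by linarith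
  have hVexp : V = Real.exp x := (Real.exp_log hV0).symm
  -- x^2 ≤ V
  have h14 : 1 + x/4 ≤ Real.exp (x/4) := by
    have := Real.add_one_le_exp (x/4); linarith
  have hexp4 : Real.exp x = (Real.exp (x/4))^4 := by
    rw [show x = x/4 + x/4 + x/4 + x/4 by ring, Real.exp_add, Real.exp_add, Real.exp_add]
    ring
  have hx2V : x^2 ≤ V := by
    rw [hVexp, hexp4]
    have hy : 0 ≤ 1 + x/4 := by linarith
    have hy4 : (1 + x/4)^4 ≤ (Real.exp (x/4))^4 := pow_le_pow_left₀ hy h14 4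
    have hxx : x^2 ≤ (1 + x/4)^4 := by nlinarith [sq_nonneg (x/4 - 1), sq_nonneg x]
    linarith
  -- 2 log x ≤ x
  have hlx2 : 2 * Real.log x ≤ x := by
    have h1 : Real.log (x^2) ≤ Real.log V := Real.log_le_log (by positivity) hx2V
    rwa [Real.log_pow, hxdef] at h1 <;> push_cast at h1 ⊢ <;> linarith [h1]
  have hlx1 : 1 ≤ Real.log x := by
    rw [Real.le_log_iff_exp_le hx0]; exact hx
  have hlL : 0 ≤ Real.log L := Real.log_nonneg (by nlinarith)
  -- floor facts
  set k : ℤ := ⌊V / (1 + 1 / x)⌋ with hkdef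
  have hd0 : (0:ℝ) < 1 + 1/x := by positivity
  have hk_le : (k:ℝ) ≤ V / (1 + 1/x) := Int.floor_le _
  have hk_gt : V / (1 + 1/x) - 1 < (k:ℝ) := Int.sub_one_lt_floor _
  have hkV : (k:ℝ) ≤ V := hk_le.trans (div_le_self hV0.le (by
    have : (0:ℝ) < 1/x := by positivity
    linarith))
  have hinv : x * (1/x) = 1 := by field_simp
  have hk_le' : (k:ℝ) * (x + 1) ≤ V * x := by
    have h := (le_div_iff₀ hd0).mp hk_le
    nlinarith [h]
  have hk_gt' : V * x < ((k:ℝ) + 1) * (x + 1) := by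
    have h := (div_lt_iff₀ hd0).mp (by linarith [hk_gt] : V / (1 + 1/x) < (k:ℝ) + 1)
    nlinarith [h]
  have hk1 : (1:ℝ) ≤ (k:ℝ) := by
    have : (1:ℤ) ≤ k := by
      rw [hkdef, Int.le_floor]
      push_cast
      rw [le_div_iff₀ hd0]
      have hx1 : 1/x ≤ 1 := by rw [div_le_one hx0]; linarith
      nlinarith
    exact_mod_cast this
  have hk0 : (0:ℝ) < (k:ℝ) := by linarith
  have hlk : Real.log (k:ℝ) ≤ x := Real.log_le_log hk0 hkV
  -- rewrite the logs
  rw [Real.log_mul (ne_of_gt hk0) (ne_of_gt hL0),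
      show (1/x) * V = V / x by ring,
      Real.log_div (ne_of_gt hV0) (ne_of_gt hx0),
      Real.log_div (ne_of_gt hV0) (ne_of_gt hL0), ← hxdef]
  set K : ℝ := (k:ℝ)
  set lx := Real.log x
  set lk := Real.log K
  set lL := Real.log L
  -- key step: (V - K) * (x - 2*lx) ≤ V
  have hVK : 0 ≤ V - K := by linarith
  have hstep : (V - K) * (x - 2*lx) ≤ V := by
    have h3 : x - 2*lx ≤ x - 2 := by linarith
    have h1 : 0 ≤ x - 2*lx := by linarith
    have p1 : (V - K) * (x - 2*lx) ≤ (V - K) * (x - 2) :=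
      mul_le_mul_of_nonneg_left h3 hVK
    have p2 : (V - K) * (x + 1) ≤ V + x + 1 := by nlinarith [hk_gt']
    have hx2' : (0:ℝ) ≤ x - 2 := by linarith
    have p3 : (V - K) * (x + 1) * (x - 2) ≤ (V + x + 1) * (x - 2) :=
      mul_le_mul_of_nonneg_right p2 hx2'
    nlinarith [p1, p3, hx2V, hxe, hV0]
  have q1 : K * lk ≤ K * x := mul_le_mul_of_nonneg_left hlk (by linarith)
  have q2 : K * lL ≤ V * lL := mul_le_mul_of_nonneg_right hkV hlL
  have hstep' : V*x - K*x - 2*(V*lx) + 2*(K*lx) ≤ V := by nlinarith [hstep]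
  nlinarith [q1, q2, hstep']
end

section
/- For all sufficiently large natural numbers q, the sum over primes p dividing q of 1/√p is O(√(log q)/log log q). More precisely, there is a constant c > 0 such that for all q ≥ 16, ∑_{p | q, p prime} p^{-1/2} ≤ c·√(log q)/log log q. -/
/-!
Split the primes `p ∣ q` at `L = log q`. A prime `p > L` satisfies
`p^(-1/2) ≤ log p / (√L log L)`, and `∑_{p ∣ q} log p ≤ log q = L`, so these primes contribute at
most `√L / log L`. The primes `p ≤ L` contribute at most `∑_{p ≤ L} p^(-1/2) ≪ √L / log L`.
This Chebyshev-type bound follows from `θ(x) ≤ x log 4` by cutting the primes into dyadic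
blocks `(2^k, 2^(k+1)]`: a block has at most `2^(k+2)/k` elements, each contributing at most
`2^(-k/2)`, and the block bounds `4·2^(k/2)/k` grow geometrically.
-/

open Nat hiding log sqrt
open Finset Real Chebyshev

lemma sqrt_two_pow_mul_self (K : ℕ) : √2 ^ K * √2 ^ K = 2 ^ K := by
  rw [← mul_pow, mul_self_sqrt zero_le_two]

lemma sqrt_two_pow (K : ℕ) : √((2 : ℝ) ^ K) = √2 ^ K := by
  rw [← sqrt_two_pow_mul_self, sqrt_mul_self (by positivity)]

lemma sum_inv_sqrt_primesLE_le (n : ℕ) : ∑ p ∈ primesLE n, (√(p : ℝ))⁻¹ ≤ n := by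
  have hterm : ∀ p ∈ primesLE n, (√(p : ℝ))⁻¹ ≤ 1 := fun p hp =>
    inv_le_one_of_one_le₀ (one_le_sqrt.2 (mod_cast (prime_of_mem_primesLE hp).one_le))
  have hcard : #(primesLE n) ≤ n := by
    simpa [primesLE_eq_filter_Icc_one] using card_filter_le (Icc 1 n) Nat.Prime
  calc ∑ p ∈ primesLE n, (√(p : ℝ))⁻¹ ≤ #(primesLE n) • (1 : ℝ) := sum_le_card_nsmul _ _ _ hterm
    _ ≤ n := by simpa using hcard

lemma sum_inv_sqrt_primesLE_dyadic_block_le {K : ℕ} (hK : 0 < K) :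
    ∑ p ∈ primesLE (2 ^ (K + 1)) with 2 ^ K < p, (√(p : ℝ))⁻¹ ≤ 4 * √2 ^ K / K := by
  set B := {p ∈ primesLE (2 ^ (K + 1)) | 2 ^ K < p}
  have hcard : (#B : ℝ) * (K * log 2) ≤ 2 ^ (K + 2) * log 2 := calc
    (#B : ℝ) * (K * log 2) = #B • log ((2 : ℝ) ^ K) := by rw [Real.log_pow, nsmul_eq_mul]
    _ ≤ ∑ p ∈ B, log p := card_nsmul_le_sum _ _ _ fun p hp => by
        gcongr; exact_mod_cast (mem_filter.1 hp).2.le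
    _ ≤ θ (2 ^ (K + 1) : ℕ) := by
        rw [theta_eq_sum_primesLE_log]
        exact sum_le_sum_of_subset_of_nonneg (filter_subset _ _) fun p _ _ => log_natCast_nonneg p
    _ ≤ log 4 * (2 ^ (K + 1) : ℕ) := theta_le_log4_mul_x (by positivity)
    _ = 2 ^ (K + 2) * log 2 := by
        rw [show (4 : ℝ) = 2 ^ 2 by norm_num, Real.log_pow]; push_cast; ring
  have hterm : ∀ p ∈ B, (√(p : ℝ))⁻¹ ≤ (√2 ^ K)⁻¹ := fun p hp => by
    rw [← sqrt_two_pow]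
    gcongr
    exact_mod_cast (mem_filter.1 hp).2.le
  have hK' : (0 : ℝ) < K := mod_cast hK
  calc ∑ p ∈ B, (√(p : ℝ))⁻¹ ≤ #B • (√2 ^ K)⁻¹ := sum_le_card_nsmul _ _ _ hterm
    _ ≤ 2 ^ (K + 2) / K * (√2 ^ K)⁻¹ := by
        rw [nsmul_eq_mul]
        gcongr
        rw [le_div_iff₀ hK']
        nlinarith [Real.log_pos one_lt_two]
    _ = 4 * √2 ^ K / K := by
        rw [pow_add, ← sqrt_two_pow_mul_self]
        field_simp
        norm_num

lemma sum_inv_sqrt_primesLE_two_pow_le {K : ℕ} (hK : 0 < K) :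
    ∑ p ∈ primesLE (2 ^ K), (√(p : ℝ))⁻¹ ≤ 32 * √2 ^ K / K := by
  have hsqrt2 : (1.41 : ℝ) ≤ √2 := by
    nlinarith [sq_sqrt (zero_le_two : (0 : ℝ) ≤ 2), sqrt_nonneg 2]
  have hsmall : ∀ k : ℕ, 0 < k → k ≤ 4 →
      ∑ p ∈ primesLE (2 ^ k), (√(p : ℝ))⁻¹ ≤ 32 * √2 ^ k / k := fun k hk0 hk4 => by
    have hpow : √2 ^ k ≤ 4 := calc
      √2 ^ k ≤ √2 ^ 4 := pow_le_pow_right₀ (by linarith) hk4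
      _ = 4 := by rw [← sqrt_two_pow]; norm_num
    have hk : (k : ℝ) ≤ 4 := mod_cast hk4
    calc ∑ p ∈ primesLE (2 ^ k), (√(p : ℝ))⁻¹ ≤ ((2 ^ k : ℕ) : ℝ) := sum_inv_sqrt_primesLE_le _
      _ = √2 ^ k * √2 ^ k := by push_cast; rw [sqrt_two_pow_mul_self]
      _ ≤ 32 * √2 ^ k / k := by
        rw [le_div_iff₀ (by exact_mod_cast hk0)]
        nlinarith [pow_pos (sqrt_pos.2 (zero_lt_two : (0:ℝ) < 2)) k]
  induction K, hK using Nat.le_induction with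
  | base => exact hsmall 1 one_pos (by norm_num)
  | succ K hK ih =>
    rcases le_or_gt K 3 with hK3 | hK4
    · exact hsmall (K + 1) K.succ_pos (by omega)
    · have hK4' : (4 : ℝ) ≤ K := mod_cast hK4
      have hsplit := sum_filter_add_sum_filter_not (primesLE (2 ^ (K + 1))) (fun p => 2 ^ K < p)
        fun p => (√(p : ℝ))⁻¹
      have hlow : ∑ p ∈ primesLE (2 ^ (K + 1)) with ¬2 ^ K < p, (√(p : ℝ))⁻¹
          ≤ ∑ p ∈ primesLE (2 ^ K), (√(p : ℝ))⁻¹ := by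
        refine sum_le_sum_of_subset_of_nonneg (fun p hp => ?_) fun p _ _ => by positivity
        simp only [mem_filter, mem_primesLE] at hp ⊢
        exact ⟨not_lt.1 hp.2, hp.1.2⟩
      calc ∑ p ∈ primesLE (2 ^ (K + 1)), (√(p : ℝ))⁻¹
          ≤ 4 * √2 ^ K / K + 32 * √2 ^ K / K := by
            linarith [sum_inv_sqrt_primesLE_dyadic_block_le hK, hsplit, hlow, ih]
        _ ≤ 32 * √2 ^ (K + 1) / ↑(K + 1) := by
            rw [← add_div, pow_succ, div_le_div_iff₀ (by positivity) (by positivity)]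
            have hgrowth : 36 * ((K : ℝ) + 1) ≤ 32 * √2 * K := by nlinarith
            push_cast
            nlinarith [mul_le_mul_of_nonneg_left hgrowth (pow_nonneg (sqrt_nonneg 2) K)]

lemma sum_inv_sqrt_primesLE_floor_le {x : ℝ} (hx : 1 < x) :
    ∑ p ∈ primesLE ⌊x⌋₊, (√(p : ℝ))⁻¹ ≤ 32 * √x / log x := by
  set n := ⌊x⌋₊
  have hn : n ≠ 0 := (Nat.floor_pos.2 hx.le).ne'
  set K := Nat.log 2 n + 1
  have hnK : n < 2 ^ K := Nat.lt_pow_succ_log_self one_lt_two n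
  have hKx : (2 : ℝ) ^ K ≤ 2 * x := calc
    (2 : ℝ) ^ K = 2 * ((2 ^ Nat.log 2 n : ℕ) : ℝ) := by push_cast; ring
    _ ≤ 2 * x := by
      gcongr
      exact (Nat.cast_le.2 (Nat.pow_log_le_self 2 hn)).trans (Nat.floor_le (by linarith))
  have hlogx : log x ≤ K * log 2 := by
    rw [← Real.log_pow]
    refine log_le_log (by linarith) ((Nat.lt_floor_add_one x).le.trans ?_)
    exact_mod_cast hnK
  have hsqrt2_log2 : √2 * log 2 ≤ 1 := by
    have := log_two_lt_d9
    nlinarith [sq_sqrt (zero_le_two : (0 : ℝ) ≤ 2), sqrt_nonneg 2, Real.log_pos one_lt_two]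
  have hlogx0 : 0 < log x := Real.log_pos hx
  calc ∑ p ∈ primesLE n, (√(p : ℝ))⁻¹ ≤ ∑ p ∈ primesLE (2 ^ K), (√(p : ℝ))⁻¹ :=
        sum_le_sum_of_subset_of_nonneg (primesLE_mono hnK.le) fun p _ _ => by positivity
    _ ≤ 32 * √2 ^ K / K := sum_inv_sqrt_primesLE_two_pow_le (by positivity)
    _ ≤ 32 * (√2 * √x) / (log x / log 2) := by
        rw [← sqrt_two_pow, ← sqrt_mul zero_le_two]
        gcongr
        rwa [div_le_iff₀ (Real.log_pos one_lt_two)]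
    _ = 32 * (√2 * log 2) * √x / log x := by field_simp
    _ ≤ 32 * √x / log x := by gcongr; linarith

lemma sum_log_primeFactors_le (q : ℕ) : ∑ p ∈ q.primeFactors, log p ≤ log q := by
  rcases eq_or_ne q 0 with rfl | hq
  · simp
  calc ∑ p ∈ q.primeFactors, log p = log ((∏ p ∈ q.primeFactors, p : ℕ) : ℝ) := by
        rw [Nat.cast_prod, log_prod fun p hp => mod_cast (prime_of_mem_primeFactors hp).ne_zero]
    _ ≤ log q := log_le_log (mod_cast prod_pos fun p hp => (prime_of_mem_primeFactors hp).pos)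
        (mod_cast Nat.le_of_dvd (Nat.pos_of_ne_zero hq) (Nat.prod_primeFactors_dvd q))

lemma sum_inv_sqrt_primeFactors_gt_le (q : ℕ) {y : ℝ} (hy : 1 < y) :
    ∑ p ∈ q.primeFactors with y < ((p : ℕ) : ℝ), (√(p : ℝ))⁻¹ ≤ log q / (√y * log y) := by
  have hy0 : 0 < √y * log y := mul_pos (sqrt_pos.2 (by linarith)) (Real.log_pos hy)
  calc ∑ p ∈ q.primeFactors with y < ((p : ℕ) : ℝ), (√(p : ℝ))⁻¹
      ≤ ∑ p ∈ q.primeFactors with y < ((p : ℕ) : ℝ), log p / (√y * log y) := by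
        refine sum_le_sum fun p hp => ?_
        have hyp : y < p := (mem_filter.1 hp).2
        rw [le_div_iff₀ hy0, inv_mul_le_iff₀ (sqrt_pos.2 (by linarith))]
        gcongr
        exact (Real.log_pos hy).le
    _ ≤ log q / (√y * log y) := by
        rw [← sum_div]
        gcongr
        exact (sum_le_sum_of_subset_of_nonneg (filter_subset _ _)
          fun p _ _ => log_natCast_nonneg p).trans (sum_log_primeFactors_le q)

theorem stmt2 : ∃ c : ℝ, 0 < c ∧ ∀ q : ℕ, 16 ≤ q →
    ∑ p ∈ q.primeFactors, (p : ℝ) ^ (-(1 / 2 : ℝ)) ≤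
      c * Real.sqrt (Real.log q) / Real.log (Real.log q) := by
  refine ⟨33, by norm_num, fun q hq => ?_⟩
  set L := log q
  have hL : 1 < L := by
    rw [lt_log_iff_exp_lt (by positivity)]
    have : (16 : ℝ) ≤ q := mod_cast hq
    linarith [exp_one_lt_d9]
  have hsmall : ∑ p ∈ q.primeFactors with ¬L < ((p : ℕ) : ℝ), (√(p : ℝ))⁻¹ ≤ 32 * √L / log L := by
    refine (sum_le_sum_of_subset_of_nonneg (fun p hp => ?_) fun _ _ _ => by positivity).trans
      (sum_inv_sqrt_primesLE_floor_le hL)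
    obtain ⟨hpq, hpL⟩ := mem_filter.1 hp
    exact mem_primesLE.2 ⟨Nat.le_floor (not_lt.1 hpL), prime_of_mem_primeFactors hpq⟩
  calc ∑ p ∈ q.primeFactors, (p : ℝ) ^ (-(1 / 2 : ℝ)) = ∑ p ∈ q.primeFactors, (√(p : ℝ))⁻¹ := by
        simp_rw [rpow_neg (Nat.cast_nonneg _), sqrt_eq_rpow]
    _ = ∑ p ∈ q.primeFactors with L < ((p : ℕ) : ℝ), (√(p : ℝ))⁻¹
          + ∑ p ∈ q.primeFactors with ¬L < ((p : ℕ) : ℝ), (√(p : ℝ))⁻¹ :=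
        (sum_filter_add_sum_filter_not _ _ _).symm
    _ ≤ L / (√L * log L) + 32 * √L / log L :=
        add_le_add (sum_inv_sqrt_primeFactors_gt_le q hL) hsmall
    _ = 33 * √L / log L := by rw [← div_div, div_sqrt]; ring
end

section
/- Let χ be a Dirichlet character modulo q, let d be a positive integer, let s be a complex number with Re(s) ≥ 1/2, and define l_d(s, χ) = ∏_{p | d} (1 − χ(p)/p^s), the product over distinct primes dividing d. Then |log|l_d(s, χ)|| ≤ ∑_{p | d} −log(1 − p^{-1/2}); in particular, log|l_d(s, χ)| = O(√(log d)/log log d) for d large. -/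
/-! Each Euler factor `1 - χ(p) p^{-s}` lies within `p^{-1/2} < 1` of `1`, so its norm lies in
`[1 - p^{-1/2}, 1 + p^{-1/2}]`; since `(1 + r)(1 - r) ≤ 1`, both ends have logarithm of absolute
value at most `-log (1 - p^{-1/2})`. Summing over `p ∣ d` bounds the logarithm of the product. -/

section NormOneSub

variable {R : Type*} [SeminormedRing R] [NormOneClass R] {z : R} {r : ℝ}

lemma one_sub_le_norm_one_sub (hz : ‖z‖ ≤ r) : 1 - r ≤ ‖1 - z‖ := by
  have := norm_sub_norm_le (1 : R) z
  rw [norm_one] at this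
  linarith

lemma norm_one_sub_le_one_add (hz : ‖z‖ ≤ r) : ‖1 - z‖ ≤ 1 + r := by
  have := norm_sub_le (1 : R) z
  rw [norm_one] at this
  linarith

theorem abs_log_norm_one_sub_le (hz : ‖z‖ ≤ r) (hr : r < 1) :
    |Real.log ‖1 - z‖| ≤ -Real.log (1 - r) := by
  have hr₀ : 0 ≤ r := (norm_nonneg z).trans hz
  have hlow := one_sub_le_norm_one_sub hz
  have hpos : 0 < 1 - r := by linarith
  have hlog_one_add : Real.log (1 + r) ≤ -Real.log (1 - r) := by
    have : Real.log ((1 + r) * (1 - r)) ≤ 0 := Real.log_nonpos (by nlinarith) (by nlinarith)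
    rw [Real.log_mul (by linarith) hpos.ne'] at this
    linarith
  rw [abs_le]
  constructor
  · linarith [Real.log_le_log hpos hlow]
  · exact (Real.log_le_log (hpos.trans_le hlow) (norm_one_sub_le_one_add hz)).trans hlog_one_add

end NormOneSub

theorem abs_log_norm_prod_one_sub_le {R ι : Type*} [SeminormedCommRing R] [NormMulClass R]
    [NormOneClass R] (t : Finset ι) {z : ι → R} {r : ι → ℝ} (hz : ∀ i ∈ t, ‖z i‖ ≤ r i)
    (hr : ∀ i ∈ t, r i < 1) :
    |Real.log ‖∏ i ∈ t, (1 - z i)‖| ≤ ∑ i ∈ t, -Real.log (1 - r i) := by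
  have hne : ∀ i ∈ t, ‖1 - z i‖ ≠ 0 := fun i hi =>
    (lt_of_lt_of_le (by linarith [hr i hi]) (one_sub_le_norm_one_sub (hz i hi))).ne'
  rw [norm_prod, Real.log_prod hne]
  exact (Finset.abs_sum_le_sum_abs _ _).trans
    (Finset.sum_le_sum fun i hi => abs_log_norm_one_sub_le (hz i hi) (hr i hi))

lemma DirichletCharacter.norm_apply_div_natCast_cpow_le {q : ℕ} (χ : DirichletCharacter ℂ q)
    {n : ℕ} (hn : 0 < n) {s : ℂ} {σ : ℝ} (hs : σ ≤ s.re) :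
    ‖χ n / (n : ℂ) ^ s‖ ≤ (n : ℝ) ^ (-σ) := by
  rw [norm_div, Complex.norm_natCast_cpow_of_pos hn, Real.rpow_neg (by positivity), ← one_div]
  gcongr
  · exact χ.norm_le_one _
  · exact_mod_cast hn

theorem stmt6_general (q d : ℕ) (χ : DirichletCharacter ℂ q) (s : ℂ)
    (hs : (1 / 2 : ℝ) ≤ s.re) :
    |Real.log ‖∏ p ∈ d.primeFactors, (1 - χ (p : ZMod q) / (p : ℂ) ^ s)‖| ≤
      ∑ p ∈ d.primeFactors, -Real.log (1 - (p : ℝ) ^ (-(1 / 2 : ℝ))) := by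
  refine abs_log_norm_prod_one_sub_le _ (fun p hp => ?_) (fun p hp => ?_)
  · exact χ.norm_apply_div_natCast_cpow_le (Nat.prime_of_mem_primeFactors hp).pos hs
  · exact Real.rpow_lt_one_of_one_lt_of_neg
      (by exact_mod_cast (Nat.prime_of_mem_primeFactors hp).one_lt) (by norm_num)

theorem stmt6 (q d : ℕ) (hd : 0 < d) (χ : DirichletCharacter ℂ q) (s : ℂ)
    (hs : (1 / 2 : ℝ) ≤ s.re) :
    |Real.log ‖∏ p ∈ d.primeFactors, (1 - χ (p : ZMod q) / (p : ℂ) ^ s)‖| ≤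
      ∑ p ∈ d.primeFactors, -Real.log (1 - (p : ℝ) ^ (-(1 / 2 : ℝ))) :=
  stmt6_general q d χ s hs
end

section
/- Let n be a positive integer with prime factorization p₁^{e₁}⋯p_m^{e_m} and total exponent e = e₁ + ⋯ + e_m ≤ k. For complex numbers a(p) indexed by primes, define c_n = multinomial(e; e₁,…,e_m) · ∏ a(p_i)^{e_i} (the coefficient of n^{-s} in (∑_p a(p) p^{-s})^k when e = k). Then for any α ≥ 0, ∑_{n: Ω(n) = k, n is y-smooth in the primes p ≤ N} |c_n|² n^{-2α} ≤ k! · (∑_{p ≤ N} |a(p)|² p^{-2α})^k. -/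
/-!
Write `e = (e_p)_p` for the exponent vector of `n`. Every `n` in the sum is determined by `e`,
which is a composition of `k` supported on the primes `p ≤ N`, and its term equals
`M(e)² ∏_p t_p^{e_p}` with `M(e)` the multinomial coefficient and `t_p = |a(p)|² p^{-2α}`.
Since `M(e) ≤ k!`, this is at most `k! · M(e) ∏_p t_p^{e_p}`, and summing over all compositions
gives `k! (∑_p t_p)^k` by the multinomial theorem.
-/

open Finset
open scoped Nat

namespace Nat

lemma multinomial_le_factorial_sum {α : Type*} (s : Finset α) (f : α → ℕ) :
    multinomial s f ≤ (∑ i ∈ s, f i)! :=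
  le_of_dvd (factorial_pos _) (Dvd.intro_left _ (multinomial_spec s f))

lemma sum_primeFactors_factorization (n : ℕ) :
    ∑ p ∈ n.primeFactors, n.factorization p = n.primeFactorsList.length := by
  rw [← ArithmeticFunction.cardFactors_apply, ArithmeticFunction.cardFactors_eq_sum_factorization,
    Finsupp.sum, support_factorization]

lemma cast_rpow_eq_prod_primeFactors {n : ℕ} (hn : n ≠ 0) (r : ℝ) :
    (n : ℝ) ^ r = ∏ p ∈ n.primeFactors, ((p : ℝ) ^ r) ^ n.factorization p := by
  conv_lhs => rw [prod_primeFactors_pow_factorization hn]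
  push_cast
  rw [← Real.finsetProd_rpow _ _ fun p _ ↦ by positivity]
  exact prod_congr rfl fun p _ ↦ (Real.rpow_pow_comm (cast_nonneg p) r _).symm

section primeFactorsSubset

variable {n : ℕ} {S : Finset ℕ}

lemma factorization_eq_zero_of_notMem_primeFactors {p : ℕ} (hp : p ∉ n.primeFactors) :
    n.factorization p = 0 :=
  Finsupp.notMem_support_iff.mp hp

lemma sum_factorization_of_primeFactors_subset (hS : n.primeFactors ⊆ S) :
    ∑ p ∈ S, n.factorization p = n.primeFactorsList.length := by
  rw [← sum_primeFactors_factorization,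
    sum_subset hS fun _ _ hp ↦ factorization_eq_zero_of_notMem_primeFactors hp]

lemma multinomial_factorization_of_primeFactors_subset (hS : n.primeFactors ⊆ S) :
    multinomial S n.factorization = multinomial n.primeFactors n.factorization :=
  (multinomial_congr_of_sdiff hS
    (fun _ hp ↦ factorization_eq_zero_of_notMem_primeFactors (mem_sdiff.mp hp).2)
    fun _ _ ↦ rfl).symm

lemma prod_pow_factorization_of_primeFactors_subset {M : Type*} [CommMonoid M]
    (hS : n.primeFactors ⊆ S) (g : ℕ → M) :
    ∏ p ∈ S, g p ^ n.factorization p = ∏ p ∈ n.primeFactors, g p ^ n.factorization p :=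
  (prod_subset hS fun _ _ hp ↦ by
    rw [factorization_eq_zero_of_notMem_primeFactors hp, pow_zero]).symm

lemma factorization_mem_piAntidiag (hS : n.primeFactors ⊆ S) :
    ⇑n.factorization ∈ piAntidiag S n.primeFactorsList.length :=
  mem_piAntidiag.mpr ⟨sum_factorization_of_primeFactors_subset hS, fun _ hp ↦
    hS (by rwa [← support_factorization, Finsupp.mem_support_iff])⟩

lemma sq_multinomial_mul_prod_mul_rpow_of_primeFactors_subset (hn : n ≠ 0)
    (hS : n.primeFactors ⊆ S) (w : ℕ → ℝ) (r : ℝ) :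
    ((multinomial n.primeFactors n.factorization : ℝ) *
        ∏ p ∈ n.primeFactors, w p ^ n.factorization p) ^ 2 * (n : ℝ) ^ r =
      (multinomial S n.factorization : ℝ) ^ 2 *
        ∏ p ∈ S, (w p ^ 2 * (p : ℝ) ^ r) ^ n.factorization p := by
  rw [multinomial_factorization_of_primeFactors_subset hS,
    prod_pow_factorization_of_primeFactors_subset hS, cast_rpow_eq_prod_primeFactors hn r,
    mul_pow, mul_assoc, ← prod_pow, ← prod_mul_distrib]
  simp only [mul_pow, ← pow_mul, mul_comm 2]

end primeFactorsSubset

end Nat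

theorem sum_multinomial_sq_mul_prod_pow_le {ι : Type*} [DecidableEq ι] (s : Finset ι)
    (t : ι → ℝ) (ht : ∀ i ∈ s, 0 ≤ t i) (k : ℕ) :
    ∑ f ∈ piAntidiag s k, (Nat.multinomial s f : ℝ) ^ 2 * ∏ i ∈ s, t i ^ f i ≤
      k ! * (∑ i ∈ s, t i) ^ k := by
  rw [sum_pow_eq_sum_piAntidiag, mul_sum]
  refine sum_le_sum fun f hf ↦ ?_
  have hM : (Nat.multinomial s f : ℝ) ≤ k ! := by
    exact_mod_cast (mem_piAntidiag.mp hf).1 ▸ Nat.multinomial_le_factorial_sum s f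
  have hw : 0 ≤ ∏ i ∈ s, t i ^ f i := prod_nonneg fun i hi ↦ pow_nonneg (ht i hi) _
  calc (Nat.multinomial s f : ℝ) ^ 2 * ∏ i ∈ s, t i ^ f i
      = Nat.multinomial s f * (Nat.multinomial s f * ∏ i ∈ s, t i ^ f i) := by ring
    _ ≤ k ! * (Nat.multinomial s f * ∏ i ∈ s, t i ^ f i) := by gcongr

theorem stmt8_general (a : ℕ → ℂ) (k N : ℕ) (α : ℝ) :
    ∑ n ∈ (Finset.Icc 1 (N ^ k)).filter
        (fun n => n.primeFactorsList.length = k ∧ ∀ p ∈ n.primeFactors, p ≤ N),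
      ((Nat.multinomial n.primeFactors (fun p => n.factorization p) : ℝ) *
          ∏ p ∈ n.primeFactors, ‖a p‖ ^ (n.factorization p)) ^ 2 *
        (n : ℝ) ^ (-(2 * α)) ≤
      (Nat.factorial k : ℝ) *
        (∑ p ∈ (Finset.Icc 1 N).filter Nat.Prime,
            ‖a p‖ ^ 2 * (p : ℝ) ^ (-(2 * α))) ^ k := by
  classical
  set S := (Finset.Icc 1 N).filter Nat.Prime
  set t : ℕ → ℝ := fun p ↦ ‖a p‖ ^ 2 * (p : ℝ) ^ (-(2 * α))
  set F := (Finset.Icc 1 (N ^ k)).filter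
    (fun n => n.primeFactorsList.length = k ∧ ∀ p ∈ n.primeFactors, p ≤ N)
  have hF : ∀ n ∈ F, n ≠ 0 ∧ n.primeFactorsList.length = k ∧ n.primeFactors ⊆ S := by
    intro n hn
    simp only [F, mem_filter, mem_Icc] at hn
    refine ⟨by omega, hn.2.1, fun p hp ↦ ?_⟩
    have hp' := Nat.prime_of_mem_primeFactors hp
    exact mem_filter.mpr ⟨mem_Icc.mpr ⟨hp'.one_le, hn.2.2 p hp⟩, hp'⟩
  have hinj : Set.InjOn (fun n : ℕ ↦ ⇑n.factorization) F := fun m hm n hn h ↦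
    Nat.factorization_inj (hF m hm).1 (hF n hn).1 (DFunLike.coe_injective h)
  have himage : F.image (fun n : ℕ ↦ ⇑n.factorization) ⊆ piAntidiag S k := by
    simp only [image_subset_iff]
    intro n hn
    obtain ⟨-, hk, hS⟩ := hF n hn
    exact hk ▸ Nat.factorization_mem_piAntidiag hS
  rw [sum_congr rfl fun n hn ↦
    Nat.sq_multinomial_mul_prod_mul_rpow_of_primeFactors_subset (hF n hn).1 (hF n hn).2.2 _ _]
  calc _ = ∑ f ∈ F.image (fun n : ℕ ↦ ⇑n.factorization),
        (Nat.multinomial S f : ℝ) ^ 2 * ∏ p ∈ S, t p ^ f p := (sum_image hinj).symm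
    _ ≤ ∑ f ∈ piAntidiag S k, (Nat.multinomial S f : ℝ) ^ 2 * ∏ p ∈ S, t p ^ f p :=
        sum_le_sum_of_subset_of_nonneg himage fun f _ _ ↦ by positivity
    _ ≤ _ := sum_multinomial_sq_mul_prod_pow_le S t (fun p _ ↦ by positivity) k

theorem stmt8 (a : ℕ → ℂ) (k N : ℕ) (hN : 2 ≤ N) (α : ℝ) (hα : 0 ≤ α) :
    ∑ n ∈ (Finset.Icc 1 (N ^ k)).filter
        (fun n => n.primeFactorsList.length = k ∧ ∀ p ∈ n.primeFactors, p ≤ N),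
      ((Nat.multinomial n.primeFactors (fun p => n.factorization p) : ℝ) *
          ∏ p ∈ n.primeFactors, ‖a p‖ ^ (n.factorization p)) ^ 2 *
        (n : ℝ) ^ (-(2 * α)) ≤
      (Nat.factorial k : ℝ) *
        (∑ p ∈ (Finset.Icc 1 N).filter Nat.Prime,
            ‖a p‖ ^ 2 * (p : ℝ) ^ (-(2 * α))) ^ k :=
  stmt8_general a k N α
end
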